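/- arXiv:2004.01783 — 5 statements merged into one kernel-verified Lean document; each statement's English description precedes it below -/
import Mathlib

section
/- Let Ω ⊆ R^n be a closed convex set, x̄ ∈ Ω, and d a tangent direction to Ω at x̄ (i.e., d ∈ T_Ω(x̄)). Then the directional limiting normal cone N_Ω(x̄; d) equals N_Ω(x̄) ∩ {d}^⊥, i.e., it consists of all normal vectors ζ ∈ N_Ω(x̄) with ⟨ζ, d⟩ = 0. -/
open Filter Topology
open scoped RealInnerProductSpace

variable {E : Type*} [NormedAddCommGroup E] [InnerProductSpace ℝ E]

/-- The tangent cone (via sequences) to `Ω` at `xb`. -/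
def tangentConeSeq (Ω : Set E) (xb : E) : Set E :=
  {d | ∃ t : ℕ → ℝ, ∃ dk : ℕ → E, (∀ k, 0 < t k) ∧ Tendsto t atTop (𝓝 0) ∧
    Tendsto dk atTop (𝓝 d) ∧ ∀ k, xb + t k • dk k ∈ Ω}

/-- The regular normal cone to a (convex) set `Ω` at `x`: empty if `x ∉ Ω`, otherwise the
usual convex normal cone. -/
def regNormalCone (Ω : Set E) (x : E) : Set E :=
  {ζ | x ∈ Ω ∧ ∀ y ∈ Ω, ⟪ζ, y - x⟫ ≤ 0}

/-- The limiting normal cone to `Ω` at `xb` in direction `d`. -/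
def dirNormalCone (Ω : Set E) (xb : E) (d : E) : Set E :=
  {ζ | ∃ t : ℕ → ℝ, ∃ dk : ℕ → E, ∃ ζk : ℕ → E, (∀ k, 0 < t k) ∧
    Tendsto t atTop (𝓝 0) ∧ Tendsto dk atTop (𝓝 d) ∧ Tendsto ζk atTop (𝓝 ζ) ∧
    ∀ k, ζk k ∈ regNormalCone Ω (xb + t k • dk k)}

/-- For a closed convex set `Ω`, `xb ∈ Ω` and a tangent direction `d ∈ T_Ω(xb)`, the directional
limiting normal cone `N_Ω(xb; d)` equals `N_Ω(xb) ∩ {d}ᗮ`. -/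
theorem dirNormalCone_convex (n : ℕ) (Ω : Set (EuclideanSpace ℝ (Fin n)))
    (hconv : Convex ℝ Ω) (hcl : IsClosed Ω) (xb : EuclideanSpace ℝ (Fin n)) (hxb : xb ∈ Ω)
    (d : EuclideanSpace ℝ (Fin n)) (hd : d ∈ tangentConeSeq Ω xb) :
    dirNormalCone Ω xb d = {ζ | ζ ∈ regNormalCone Ω xb ∧ ⟪ζ, d⟫ = 0} := by
  ext ζ
  constructor
  · rintro ⟨t, dk, ζk, ht, ht0, hdk, hζk, hmem⟩
    have hx : Tendsto (fun k => xb + t k • dk k) atTop (𝓝 xb) := by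
      have : Tendsto (fun k => xb + t k • dk k) atTop (𝓝 (xb + (0:ℝ) • d)) :=
        tendsto_const_nhds.add (ht0.smul hdk)
      simpa using this
    have hNζ : ζ ∈ regNormalCone Ω xb := by
      refine ⟨hxb, fun y hy => ?_⟩
      have hlim : Tendsto (fun k => ⟪ζk k, y - (xb + t k • dk k)⟫) atTop
          (𝓝 ⟪ζ, y - xb⟫) := hζk.inner (tendsto_const_nhds.sub hx)
      exact le_of_tendsto hlim (Filter.Eventually.of_forall fun k => (hmem k).2 y hy)
    refine ⟨hNζ, le_antisymm ?_ ?_⟩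
    · -- ⟪ζ, d⟫ ≤ 0 using ζ ∈ N(xb) applied at the points x_k ∈ Ω
      have hle : ∀ k, ⟪ζ, dk k⟫ ≤ 0 := by
        intro k
        have h1 := hNζ.2 _ (hmem k).1
        have h2 : ⟪ζ, xb + t k • dk k - xb⟫ = t k * ⟪ζ, dk k⟫ := by
          have e : xb + t k • dk k - xb = t k • dk k := by abel
          rw [e, real_inner_smul_right]
        rw [h2] at h1
        exact nonpos_of_mul_nonpos_right h1 (ht k)
      have hlim : Tendsto (fun k => ⟪ζ, dk k⟫) atTop (𝓝 ⟪ζ, d⟫) :=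
        tendsto_const_nhds.inner hdk
      exact le_of_tendsto hlim (Filter.Eventually.of_forall hle)
    · -- 0 ≤ ⟪ζ, d⟫ using ⟪ζk k, xb - x_k⟫ ≤ 0
      have hge : ∀ k, 0 ≤ ⟪ζk k, dk k⟫ := by
        intro k
        have h1 := (hmem k).2 xb hxb
        have h2 : ⟪ζk k, xb - (xb + t k • dk k)⟫ = -(t k * ⟪ζk k, dk k⟫) := by
          have : xb - (xb + t k • dk k) = -(t k • dk k) := by abel
          rw [this, inner_neg_right, real_inner_smul_right]
        rw [h2, neg_nonpos] at h1
        exact nonneg_of_mul_nonneg_right h1 (ht k)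
      have hlim : Tendsto (fun k => ⟪ζk k, dk k⟫) atTop (𝓝 ⟪ζ, d⟫) := hζk.inner hdk
      exact ge_of_tendsto hlim (Filter.Eventually.of_forall hge)
  · rintro ⟨⟨-, hN⟩, hperp⟩
    obtain ⟨t, dk, ht, ht0, hdk, hmem⟩ := hd
    -- project x_k + t k • ζ onto Ω
    have hproj : ∀ k, ∃ u ∈ Ω,
        ∀ w ∈ Ω, ⟪(xb + t k • dk k + t k • ζ) - u, w - u⟫ ≤ 0 := by
      intro k
      obtain ⟨u, hu, heq⟩ := exists_norm_eq_iInf_of_complete_convex ⟨xb, hxb⟩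
        hcl.isComplete hconv (xb + t k • dk k + t k • ζ)
      exact ⟨u, hu, fun w hw =>
        ((norm_eq_iInf_iff_real_inner_le_zero hconv hu).1 heq) w hw⟩
    choose u hu hu2 using hproj
    set r : ℕ → EuclideanSpace ℝ (Fin n) :=
      fun k => (t k)⁻¹ • (u k - (xb + t k • dk k)) with hr
    -- key estimate : ‖r k‖^2 ≤ -⟪ζ, dk k⟫
    have hkey : ∀ k, ‖r k‖ ^ 2 ≤ -⟪ζ, dk k⟫ := by
      intro k
      have h1 := hu2 k (xb + t k • dk k) (hmem k)
      -- expand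
      have e1 : (xb + t k • dk k + t k • ζ) - u k
          = t k • ζ - (u k - (xb + t k • dk k)) := by abel
      have e2 : (xb + t k • dk k) - u k = -(u k - (xb + t k • dk k)) := by abel
      rw [e1, e2, inner_neg_right, neg_nonpos, inner_sub_left,
        real_inner_smul_left, real_inner_self_eq_norm_sq] at h1
      -- h1 : 0 ≤ t k * ⟪ζ, v⟫ - ‖v‖^2  where v = u k - x_k
      have h2 : ⟪ζ, u k - (xb + t k • dk k)⟫
          = ⟪ζ, u k - xb⟫ - t k * ⟪ζ, dk k⟫ := by
        have : u k - (xb + t k • dk k) = (u k - xb) - t k • dk k := by abel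
        rw [this, inner_sub_right, real_inner_smul_right]
      have h3 : ⟪ζ, u k - xb⟫ ≤ 0 := hN (u k) (hu k)
      have h4 : ‖u k - (xb + t k • dk k)‖ ^ 2 ≤ t k * (-(t k * ⟪ζ, dk k⟫)) := by
        nlinarith [ht k, sq_nonneg (t k)]
      have h5 : ‖r k‖ ^ 2 = (t k)⁻¹ ^ 2 * ‖u k - (xb + t k • dk k)‖ ^ 2 := by
        rw [hr]; rw [norm_smul]; rw [mul_pow]
        simp [abs_of_pos (inv_pos.2 (ht k))]
      rw [h5]
      have htk := ht k
      have := mul_le_mul_of_nonneg_left h4 (sq_nonneg ((t k)⁻¹))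
      calc (t k)⁻¹ ^ 2 * ‖u k - (xb + t k • dk k)‖ ^ 2
          ≤ (t k)⁻¹ ^ 2 * (t k * (-(t k * ⟪ζ, dk k⟫))) := this
        _ = -⟪ζ, dk k⟫ := by field_simp
    -- r k → 0
    have hr0 : Tendsto r atTop (𝓝 0) := by
      have hsq : Tendsto (fun k => ‖r k‖ ^ 2) atTop (𝓝 0) := by
        have hupper : Tendsto (fun k => -⟪ζ, dk k⟫) atTop (𝓝 0) := by
          have : Tendsto (fun k => -⟪ζ, dk k⟫) atTop (𝓝 (-⟪ζ, d⟫)) :=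
            (tendsto_const_nhds.inner hdk).neg
          rwa [hperp, neg_zero] at this
        exact squeeze_zero (fun k => sq_nonneg _) hkey hupper
      have hnorm : Tendsto (fun k => ‖r k‖) atTop (𝓝 0) := by
        have := hsq.sqrt
        simpa [Real.sqrt_sq (norm_nonneg _)] using this
      exact tendsto_zero_iff_norm_tendsto_zero.2 hnorm
    refine ⟨t, fun k => dk k + r k, fun k => ζ - r k, ht, ht0, ?_, ?_, ?_⟩
    · have : Tendsto (fun k => dk k + r k) atTop (𝓝 (d + 0)) := hdk.add hr0
      simpa using this
    · have : Tendsto (fun k => ζ - r k) atTop (𝓝 (ζ - 0)) := tendsto_const_nhds.sub hr0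
      simpa using this
    · intro k
      have hxk : xb + t k • (dk k + r k) = u k := by
        rw [smul_add, hr, smul_inv_smul₀ (ht k).ne']
        abel
      rw [hxk]
      refine ⟨hu k, fun y hy => ?_⟩
      have hrepr : ζ - r k = (t k)⁻¹ • ((xb + t k • dk k + t k • ζ) - u k) := by
        simp only [hr, smul_sub, smul_add, inv_smul_smul₀ (ht k).ne']
        abel
      show ⟪ζ - r k, y - u k⟫ ≤ 0
      rw [hrepr, real_inner_smul_left]
      exact mul_nonpos_of_nonneg_of_nonpos (inv_nonneg.2 (ht k).le) (hu2 k y hy)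
end

section
/- Let φ : R^n → R be Lipschitz continuous with constant L on an open set U containing x̄, and let F : U ⇉ R^n be a set-valued map with F(x) ⊆ L·B̄ (closed ball of radius L) and each F(x) nonempty compact. Then for any sequences x^k → x̄ and ζ^k → ζ with ζ^k ∈ co F(x^k), it holds ζ ∈ co(limsup_{x → x̄} F(x)), where limsup is the Painlevé–Kuratowski outer limit. In particular, limsup_{x → x̄} co F(x) ⊆ co(limsup_{x → x̄} F(x)). -/
open Filter Topology

/-- The Painlevé–Kuratowski outer limit of a set-valued map `F` at `xb`. -/
def outerLimit {E : Type*} [TopologicalSpace E] (F : E → Set E) (xb : E) : Set E :=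
  {y | ∃ xk : ℕ → E, ∃ yk : ℕ → E, Tendsto xk atTop (𝓝 xb) ∧ Tendsto yk atTop (𝓝 y) ∧
    ∀ k, yk k ∈ F (xk k)}

/-- Carathéodory with a fixed index type `Fin (n+1)`. -/
lemma exists_fin_rep (n : ℕ) (s : Set (EuclideanSpace ℝ (Fin n))) (hs : s.Nonempty)
    {x : EuclideanSpace ℝ (Fin n)} (hx : x ∈ convexHull ℝ s) :
    ∃ w : Fin (n + 1) → ℝ, ∃ p : Fin (n + 1) → EuclideanSpace ℝ (Fin n),
      (∀ i, 0 ≤ w i) ∧ (∑ i, w i) = 1 ∧ (∀ i, p i ∈ s) ∧ (∑ i, w i • p i) = x := by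
  classical
  obtain ⟨ι, hfin, z, w, hzs, hai, hwpos, hwsum, hrep⟩ :=
    eq_pos_convex_span_of_mem_convexHull hx
  obtain ⟨x₀, hx₀⟩ := hs
  have hcard : Fintype.card ι ≤ n + 1 := by
    have h1 := hai.card_le_finrank_succ
    have h2 : Module.finrank ℝ (vectorSpan ℝ (Set.range z)) ≤ n := by
      have := Submodule.finrank_le (vectorSpan ℝ (Set.range z))
      simpa [finrank_euclideanSpace_fin] using this
    omega
  obtain ⟨emb⟩ : Nonempty (ι ↪ Fin (n + 1)) := by
    rw [Function.Embedding.nonempty_iff_card_le]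
    simpa using hcard
  refine ⟨Function.extend emb w 0, Function.extend emb z (fun _ => x₀), ?_, ?_, ?_, ?_⟩
  · intro i
    rcases em (∃ j, emb j = i) with ⟨j, rfl⟩ | h
    · rw [emb.injective.extend_apply]; exact (hwpos j).le
    · rw [Function.extend_apply' _ _ _ h]; rfl
  · calc (∑ i, Function.extend emb w 0 i)
        = ∑ i ∈ Finset.univ.map emb, Function.extend emb w 0 i := by
          refine (Finset.sum_subset (Finset.subset_univ _) ?_).symm
          intro i _ hi
          have h : ¬ ∃ j, emb j = i := by
            rintro ⟨j, rfl⟩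
            exact hi (Finset.mem_map_of_mem _ (Finset.mem_univ j))
          rw [Function.extend_apply' _ _ _ h]; rfl
      _ = ∑ j, Function.extend emb w 0 (emb j) := Finset.sum_map _ _ _
      _ = ∑ j, w j := Finset.sum_congr rfl fun j _ => emb.injective.extend_apply _ _ _
      _ = 1 := hwsum
  · intro i
    rcases em (∃ j, emb j = i) with ⟨j, rfl⟩ | h
    · rw [emb.injective.extend_apply]; exact hzs (Set.mem_range_self j)
    · rw [Function.extend_apply' _ _ _ h]; exact hx₀
  · calc (∑ i, Function.extend emb w 0 i • Function.extend emb z (fun _ => x₀) i)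
        = ∑ i ∈ Finset.univ.map emb,
            Function.extend emb w 0 i • Function.extend emb z (fun _ => x₀) i := by
          refine (Finset.sum_subset (Finset.subset_univ _) ?_).symm
          intro i _ hi
          have h : ¬ ∃ j, emb j = i := by
            rintro ⟨j, rfl⟩
            exact hi (Finset.mem_map_of_mem _ (Finset.mem_univ j))
          rw [Function.extend_apply' _ _ _ h]
          simp
      _ = ∑ j, Function.extend emb w 0 (emb j) • Function.extend emb z (fun _ => x₀) (emb j) :=
          Finset.sum_map _ _ _
      _ = ∑ j, w j • z j := Finset.sum_congr rfl fun j _ => by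
          rw [emb.injective.extend_apply, emb.injective.extend_apply]
      _ = x := hrep

/-- For a uniformly bounded, nonempty compact valued map `F` (e.g. the subdifferential map of a
function `φ` Lipschitz with constant `L` on an open set `U ∋ xb`), limits of convex combinations
lie in the convex hull of the outer limit:
`limsup_{x → xb} co F(x) ⊆ co (limsup_{x → xb} F(x))`. -/
theorem limsup_convexHull_subset (n : ℕ)
    (φ : EuclideanSpace ℝ (Fin n) → ℝ) (U : Set (EuclideanSpace ℝ (Fin n)))
    (hU : IsOpen U) (xb : EuclideanSpace ℝ (Fin n)) (hxb : xb ∈ U) (L : ℝ) (hL : 0 ≤ L)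
    (hLip : ∀ x ∈ U, ∀ x' ∈ U, |φ x - φ x'| ≤ L * ‖x - x'‖)
    (F : EuclideanSpace ℝ (Fin n) → Set (EuclideanSpace ℝ (Fin n)))
    (hbd : ∀ x ∈ U, F x ⊆ Metric.closedBall 0 L)
    (hne : ∀ x ∈ U, (F x).Nonempty) (hcpt : ∀ x ∈ U, IsCompact (F x)) :
    ∀ (xk : ℕ → EuclideanSpace ℝ (Fin n)) (ζk : ℕ → EuclideanSpace ℝ (Fin n))
      (ζ : EuclideanSpace ℝ (Fin n)),
      Tendsto xk atTop (𝓝 xb) → Tendsto ζk atTop (𝓝 ζ) →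
      (∀ k, ζk k ∈ convexHull ℝ (F (xk k))) →
      ζ ∈ convexHull ℝ (outerLimit F xb) := by
  classical
  intro xk ζk ζ hxk hζk hmem
  -- eventually `xk k ∈ U`
  obtain ⟨N, hN⟩ : ∃ N, ∀ k ≥ N, xk k ∈ U := by
    have := hxk.eventually (hU.eventually_mem hxb)
    exact eventually_atTop.mp this
  have hU' : ∀ k, xk (k + N) ∈ U := fun k => hN (k + N) (Nat.le_add_left _ _)
  -- Carathéodory representation for each k
  have hrep : ∀ k, ∃ w : Fin (n + 1) → ℝ, ∃ p : Fin (n + 1) → EuclideanSpace ℝ (Fin n),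
      (∀ i, 0 ≤ w i) ∧ (∑ i, w i) = 1 ∧ (∀ i, p i ∈ F (xk (k + N))) ∧
      (∑ i, w i • p i) = ζk (k + N) :=
    fun k => exists_fin_rep n _ (hne _ (hU' k)) (hmem (k + N))
  choose w p hw0 hw1 hpF hsum using hrep
  -- the combined sequence lives in a compact set
  set K : Set ((Fin (n + 1) → ℝ) × (Fin (n + 1) → EuclideanSpace ℝ (Fin n))) :=
    (Set.univ.pi fun _ => Set.Icc (0 : ℝ) 1) ×ˢ
      (Set.univ.pi fun _ => Metric.closedBall (0 : EuclideanSpace ℝ (Fin n)) L) with hK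
  have hKcpt : IsCompact K :=
    (isCompact_univ_pi fun _ => isCompact_Icc).prod
      (isCompact_univ_pi fun _ => isCompact_closedBall _ _)
  have hmemK : ∀ k, (w k, p k) ∈ K := by
    intro k
    constructor
    · intro i _
      refine ⟨hw0 k i, ?_⟩
      calc w k i ≤ ∑ j, w k j :=
            Finset.single_le_sum (fun j _ => hw0 k j) (Finset.mem_univ i)
        _ = 1 := hw1 k
    · intro i _
      exact hbd _ (hU' k) (hpF k i)
  obtain ⟨⟨wl, pl⟩, hlimK, σ, hσ, hσlim⟩ := hKcpt.tendsto_subseq hmemK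
  -- component-wise convergence
  have hwlim : ∀ i, Tendsto (fun m => w (σ m) i) atTop (𝓝 (wl i)) := fun i =>
    (((continuous_apply i).comp continuous_fst).tendsto _).comp hσlim
  have hplim : ∀ i, Tendsto (fun m => p (σ m) i) atTop (𝓝 (pl i)) := fun i =>
    (((continuous_apply i).comp continuous_snd).tendsto _).comp hσlim
  -- the shifted subsequence of indices tends to atTop
  have hσ' : Tendsto (fun m => σ m + N) atTop atTop :=
    tendsto_atTop_mono (fun m => le_trans (hσ.id_le m) (Nat.le_add_right _ _)) tendsto_id
  -- `ζ = ∑ wl i • pl i`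
  have hζeq : ζ = ∑ i, wl i • pl i := by
    have h1 : Tendsto (fun m => ∑ i, w (σ m) i • p (σ m) i) atTop (𝓝 (∑ i, wl i • pl i)) :=
      tendsto_finset_sum _ fun i _ => (hwlim i).smul (hplim i)
    have h2 : Tendsto (fun m => ∑ i, w (σ m) i • p (σ m) i) atTop (𝓝 ζ) := by
      have : (fun m => ∑ i, w (σ m) i • p (σ m) i) = fun m => ζk (σ m + N) := by
        funext m; exact hsum (σ m)
      rw [this]
      exact hζk.comp hσ'
    exact tendsto_nhds_unique h2 h1
  -- weights nonneg with sum 1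
  have hwl0 : ∀ i, 0 ≤ wl i := fun i => (hlimK.1 i (Set.mem_univ i)).1
  have hwl1 : (∑ i, wl i) = 1 := by
    have h1 : Tendsto (fun m => ∑ i, w (σ m) i) atTop (𝓝 (∑ i, wl i)) :=
      tendsto_finset_sum _ fun i _ => hwlim i
    have h2 : Tendsto (fun m => ∑ i, w (σ m) i) atTop (𝓝 1) := by
      have : (fun m => ∑ i, w (σ m) i) = fun _ => (1 : ℝ) := funext fun m => hw1 (σ m)
      rw [this]; exact tendsto_const_nhds
    exact tendsto_nhds_unique h1 h2
  -- each `pl i` is in the outer limit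
  have hpOL : ∀ i, pl i ∈ outerLimit F xb := by
    intro i
    exact ⟨fun m => xk (σ m + N), fun m => p (σ m) i, hxk.comp hσ', hplim i,
      fun m => hpF (σ m) i⟩
  rw [hζeq]
  exact (convex_convexHull ℝ _).sum_mem (fun i _ => hwl0 i) hwl1
    (fun i _ => subset_convexHull ℝ _ (hpOL i))
end

section
/- For the bilevel program with F(x,y) = (x−y−1)^{5/3} + 4(x+y+1)^{5/3} minimized over −1 ≤ x ≤ 1 and y ∈ S(x), where S(x) = argmin_y{−(x+y)² + x³(x+y−1) : −y−x−1 ≤ 0, y+x−1 ≤ 0}, the point (x̄, ȳ) = (0, −1) is a global optimal solution. -/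
open Filter Topology

/-- The real odd power `t^{5/3} = sign(t)·|t|^{5/3}`. -/
noncomputable def pow53 (t : ℝ) : ℝ := Real.sign t * |t| ^ ((5 : ℝ) / 3)

/-- The upper-level objective of Example 3.1. -/
noncomputable def upperF (x y : ℝ) : ℝ := pow53 (x - y - 1) + 4 * pow53 (x + y + 1)

/-- The lower-level objective of Example 3.1. -/
noncomputable def lowf (x y : ℝ) : ℝ := -(x + y) ^ 2 + x ^ 3 * (x + y - 1)

/-- The solution set `S(x)` of the lower-level problem. -/
def lowS (x : ℝ) : Set ℝ :=
  {y | y ∈ Set.Icc (-x - 1) (1 - x) ∧ ∀ y' ∈ Set.Icc (-x - 1) (1 - x), lowf x y ≤ lowf x y'}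

lemma pow53_zero : pow53 0 = 0 := by simp [pow53]

lemma pow53_neg (t : ℝ) : pow53 (-t) = -pow53 t := by
  unfold pow53
  rw [Real.sign_neg, abs_neg]
  ring

lemma pow53_nonneg {t : ℝ} (h : 0 ≤ t) : 0 ≤ pow53 t := by
  rcases h.eq_or_lt with rfl | h
  · simp [pow53_zero]
  · unfold pow53
    rw [Real.sign_of_pos h]
    positivity

lemma pow53_le {t : ℝ} (h : |t| ≤ 4) : pow53 t ≤ 4 * pow53 2 := by
  have h2 : pow53 2 = (2:ℝ) ^ ((5:ℝ)/3) := by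
    unfold pow53
    rw [Real.sign_of_pos (by norm_num : (0:ℝ) < 2), abs_of_pos (by norm_num : (0:ℝ) < 2),
      one_mul]
  have hle : pow53 t ≤ |t| ^ ((5:ℝ)/3) := by
    unfold pow53
    have hs : Real.sign t = -1 ∨ Real.sign t = 0 ∨ Real.sign t = 1 := Real.sign_apply_eq t
    have hp : (0:ℝ) ≤ |t| ^ ((5:ℝ)/3) := Real.rpow_nonneg (abs_nonneg t) _
    rcases hs with hs | hs | hs <;> rw [hs] <;> nlinarith
  have h4 : |t| ^ ((5:ℝ)/3) ≤ (4:ℝ) ^ ((5:ℝ)/3) :=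
    Real.rpow_le_rpow (abs_nonneg t) h (by norm_num)
  have hsplit : (4:ℝ) ^ ((5:ℝ)/3) = (2:ℝ) ^ ((5:ℝ)/3) * (2:ℝ) ^ ((5:ℝ)/3) := by
    rw [show (4:ℝ) = 2 * 2 by norm_num, Real.mul_rpow (by norm_num) (by norm_num)]
  have h24 : (2:ℝ) ^ ((5:ℝ)/3) ≤ 4 := by
    have := Real.rpow_le_rpow_of_exponent_le (by norm_num : (1:ℝ) ≤ 2)
      (by norm_num : (5:ℝ)/3 ≤ 2)
    have h22 : (2:ℝ) ^ (2:ℝ) = 4 := by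
      rw [show (2:ℝ) = ((2:ℕ):ℝ) by norm_num, Real.rpow_natCast]; norm_num
    linarith
  have hpos : (0:ℝ) ≤ (2:ℝ) ^ ((5:ℝ)/3) := Real.rpow_nonneg (by norm_num) _
  calc pow53 t ≤ |t| ^ ((5:ℝ)/3) := hle
    _ ≤ (4:ℝ) ^ ((5:ℝ)/3) := h4
    _ = (2:ℝ) ^ ((5:ℝ)/3) * (2:ℝ) ^ ((5:ℝ)/3) := hsplit
    _ ≤ 4 * (2:ℝ) ^ ((5:ℝ)/3) := by nlinarith
    _ = 4 * pow53 2 := by rw [h2]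

lemma upperF_zero : upperF 0 (-1) = 0 := by
  unfold upperF
  norm_num [pow53_zero]

/-- The point `(0, −1)` is a global optimal solution of the bilevel program of Example 3.1. -/
theorem global_opt_example :
    ((-1 : ℝ) ∈ lowS 0) ∧
    (∀ x y : ℝ, -1 ≤ x → x ≤ 1 → y ∈ lowS x → upperF 0 (-1) ≤ upperF x y) := by
  constructor
  · refine ⟨⟨by norm_num, by norm_num⟩, ?_⟩
    intro y' hy'
    simp only [Set.mem_Icc] at hy'
    unfold lowf
    nlinarith [hy'.1, hy'.2]
  · intro x y hx1 hx2 hy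
    rw [upperF_zero]
    obtain ⟨⟨hy1, hy2⟩, hmin⟩ := hy
    rcases lt_trichotomy x 0 with hx | hx | hx
    · -- x < 0 : y = 1 - x
      have hm := hmin (1 - x) ⟨by linarith, le_refl _⟩
      unfold lowf at hm
      have hyx : y = 1 - x := by
        by_contra hne
        have hlt : y < 1 - x := lt_of_le_of_ne hy2 hne
        have h1 : (0:ℝ) < 1 - (x + y) := by linarith
        have hc : (0:ℝ) < -x ^ 3 := by nlinarith [mul_pos (mul_pos (neg_pos.mpr hx) (neg_pos.mpr hx)) (neg_pos.mpr hx)]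
        have h2 : (0:ℝ) < 1 + (x + y) - x ^ 3 := by linarith
        nlinarith [mul_pos h1 h2]
      subst hyx
      have e1 : x - (1 - x) - 1 = -(2 - 2*x) := by ring
      have e2 : x + (1 - x) + 1 = (2:ℝ) := by ring
      unfold upperF
      rw [e1, e2, pow53_neg]
      have hb : pow53 (2 - 2*x) ≤ 4 * pow53 2 := by
        apply pow53_le
        rw [abs_of_pos (by linarith)]
        linarith
      linarith
    · -- x = 0 : y = ±1
      subst hx
      have hm := hmin 1 ⟨by norm_num, by norm_num⟩
      unfold lowf at hm
      have hsq : y ^ 2 = 1 := by nlinarith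
      have : (y - 1) * (y + 1) = 0 := by linear_combination hsq
      rcases mul_eq_zero.mp this with h | h
      · have hy' : y = 1 := by linarith
        subst hy'
        unfold upperF
        norm_num
        rw [show pow53 (-2:ℝ) = -pow53 2 from pow53_neg 2]
        nlinarith [pow53_nonneg (by norm_num : (0:ℝ) ≤ 2)]
      · have hy' : y = -1 := by linarith
        subst hy'
        rw [upperF_zero]
    · -- x > 0 : y = -x - 1
      have hm := hmin (-x - 1) ⟨le_refl _, by linarith⟩
      unfold lowf at hm
      have hyx : y = -x - 1 := by
        by_contra hne
        have hlt : -x - 1 < y := lt_of_le_of_ne hy1 (Ne.symm hne)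
        have h1 : (0:ℝ) < 1 + (x + y) := by linarith
        have hc : (0:ℝ) < x ^ 3 := by positivity
        have h2 : (0:ℝ) < 1 - (x + y) + x ^ 3 := by linarith
        nlinarith [mul_pos h1 h2]
      subst hyx
      have e1 : x - (-x - 1) - 1 = 2*x := by ring
      have e2 : x + (-x - 1) + 1 = (0:ℝ) := by ring
      unfold upperF
      rw [e1, e2, pow53_zero]
      have := pow53_nonneg (by linarith : (0:ℝ) ≤ 2*x)
      linarith
end

section
/- For the value function reformulation (VP) of the bilevel program in Example 3.1 (F(x,y) = (x−y−1)^{5/3} + 4(x+y+1)^{5/3}, lower-level value function V(x) = −1−2x³ for x>0 and −1 for x≤0, constraints g₁(x,y) = −y−x−1 ≤ 0, g₂(x,y) = y+x−1 ≤ 0, f(x,y)−V(x) ≤ 0), the partial calmness condition fails at the global minimizer (x̄,ȳ) = (0,−1): for every ρ > 0 the point (0,−1) is not a local minimizer of F(x,y) + ρ(f(x,y) − V(x)) subject to g₁ ≤ 0, g₂ ≤ 0, −1 ≤ x ≤ 1, as witnessed by the feasible sequence (x_k, y_k) = (−1/k, 1/k − 1). -/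
open Filter Topology

/-- The lower-level value function of Example 3.1. -/
noncomputable def lowV (x : ℝ) : ℝ := if 0 < x then -1 - 2 * x ^ 3 else -1

/-- Partial calmness fails for (VP) at `(0, −1)`: for every penalty parameter `ρ > 0` and every
neighborhood of `(0,−1)` there is a feasible point of the partially penalized problem,
of the form `(−1/k, 1/k − 1)`, with strictly smaller penalized objective value than `(0,−1)`. -/
theorem partial_calmness_fails :
    ∀ ρ > (0 : ℝ), ∀ η > (0 : ℝ), ∃ k : ℕ, 1 ≤ k ∧
      (let x : ℝ := -1 / k
       let y : ℝ := 1 / k - 1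
       -- (x, y) is close to (0, −1)
       (|x - 0| < η ∧ |y - (-1)| < η) ∧
       -- (x, y) is feasible for the partially penalized problem
       (-y - x - 1 ≤ 0 ∧ y + x - 1 ≤ 0 ∧ -1 ≤ x ∧ x ≤ 1) ∧
       -- strictly smaller penalized value than at (0, −1)
       upperF x y + ρ * (lowf x y - lowV x) <
         upperF 0 (-1) + ρ * (lowf 0 (-1) - lowV 0)) := by
  intro ρ hρ η hη
  obtain ⟨k, hk⟩ := exists_nat_gt (max (max 3 ρ) (1 / η))
  have hk3 : (3 : ℝ) < k := lt_of_le_of_lt ((le_max_left _ _).trans (le_max_left _ _)) hk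
  have hkρ : ρ < k := lt_of_le_of_lt ((le_max_right _ _).trans (le_max_left _ _)) hk
  have hkη : 1 / η < k := lt_of_le_of_lt (le_max_right _ _) hk
  have hk0 : (0 : ℝ) < k := by linarith
  have hk1 : 1 ≤ k := by exact_mod_cast (by linarith : (1 : ℝ) ≤ k)
  refine ⟨k, hk1, ?_⟩
  intro x y
  have hinvη : (1 : ℝ) / k < η := by
    rw [div_lt_iff₀ hk0]
    rw [div_lt_iff₀ hη] at hkη
    linarith [mul_comm η (k : ℝ)]
  have hinvpos : (0 : ℝ) < 1 / k := by positivity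
  refine ⟨⟨?_, ?_⟩, ⟨?_, ?_, ?_, ?_⟩, ?_⟩
  · show |(-1 / (k : ℝ)) - 0| < η
    have h : (-1 / (k:ℝ)) = -(1/k) := by ring
    rw [sub_zero, h, abs_neg, abs_of_pos hinvpos]
    exact hinvη
  · show |(1 / (k : ℝ) - 1) - (-1)| < η
    have : (1 / (k : ℝ) - 1) - (-1) = 1 / k := by ring
    rw [this, abs_of_pos hinvpos]; exact hinvη
  · show -(1 / (k : ℝ) - 1) - (-1 / k) - 1 ≤ 0; ring_nf; nlinarith
  · show (1 / (k : ℝ) - 1) + (-1 / k) - 1 ≤ 0; ring_nf; nlinarith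
  · show (-1 : ℝ) ≤ -1 / k
    rw [neg_div]; have : (1:ℝ)/k ≤ 1 := by rw [div_le_one hk0]; linarith
    linarith
  · show (-1 / (k : ℝ)) ≤ 1
    rw [neg_div]; linarith
  · -- the key strict inequality
    show upperF (-1 / k) (1 / k - 1) + ρ * (lowf (-1 / k) (1 / k - 1) - lowV (-1 / k)) <
      upperF 0 (-1) + ρ * (lowf 0 (-1) - lowV 0)
    have e1 : (-1 / (k:ℝ)) - (1 / k - 1) - 1 = -(2 / k) := by ring
    have e2 : (-1 / (k:ℝ)) + (1 / k - 1) + 1 = 0 := by ring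
    have hc : (0:ℝ) < 2 / k := by positivity
    have hFL : upperF (-1 / k) (1 / k - 1) = -((2 / k) ^ ((5:ℝ)/3)) := by
      unfold upperF
      rw [e1, e2]
      unfold pow53
      rw [Real.sign_of_neg (by linarith), abs_neg, abs_of_pos hc, Real.sign_zero]
      ring
    have hFR : upperF 0 (-1) = 0 := by
      unfold upperF pow53
      norm_num
    have hVL : lowV (-1 / k) = -1 := by
      unfold lowV
      rw [if_neg (by rw [neg_div]; push_neg; linarith)]
    have hVR : lowV 0 = -1 := by unfold lowV; norm_num
    have hfL : lowf (-1 / k) (1 / k - 1) = -1 + 2 / (k:ℝ)^3 := by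
      unfold lowf; field_simp; ring
    have hfR : lowf 0 (-1) = -1 := by unfold lowf; norm_num
    rw [hFL, hFR, hVL, hVR, hfL, hfR]
    have key : ρ * (2 / (k:ℝ)^3) < (2 / k) ^ ((5:ℝ)/3) := by
      set c : ℝ := 2 / k with hc'
      have hc1 : c < 1 := by
        rw [hc', div_lt_one hk0]; linarith
      have h3 : c ^ (3:ℕ) = c ^ ((5:ℝ)/3) * c ^ ((4:ℝ)/3) := by
        rw [← Real.rpow_natCast c 3, ← Real.rpow_add hc]
        norm_num
      have hcle : c ^ ((4:ℝ)/3) ≤ c := by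
        calc c ^ ((4:ℝ)/3) ≤ c ^ ((1:ℝ)) :=
          Real.rpow_le_rpow_of_exponent_ge hc hc1.le (by norm_num)
        _ = c := Real.rpow_one c
      have hρc : ρ * c < 2 := by
        have : c < 2 / ρ := by
          rw [hc', div_lt_div_iff₀ hk0 hρ]; nlinarith
        calc ρ * c < ρ * (2 / ρ) := by exact (mul_lt_mul_iff_right₀ hρ).mpr this
        _ = 2 := by field_simp
      have hc53 : (0:ℝ) < c ^ ((5:ℝ)/3) := Real.rpow_pos_of_pos hc _
      have h2k3 : (2 : ℝ) / (k:ℝ)^3 = c ^ (3:ℕ) / 4 := by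
        rw [hc']; field_simp; ring
      rw [h2k3, h3]
      calc ρ * (c ^ ((5:ℝ)/3) * c ^ ((4:ℝ)/3) / 4)
          = c ^ ((5:ℝ)/3) * (ρ * c ^ ((4:ℝ)/3)) / 4 := by ring
        _ ≤ c ^ ((5:ℝ)/3) * (ρ * c) / 4 := by
            apply div_le_div_of_nonneg_right ?_ (by norm_num)
            apply mul_le_mul_of_nonneg_left ?_ hc53.le
            exact mul_le_mul_of_nonneg_left hcle hρ.le
        _ < c ^ ((5:ℝ)/3) * 2 / 4 := by nlinarith [hc53, hρc]
        _ ≤ c ^ ((5:ℝ)/3) := by nlinarith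
    nlinarith [key]
end

section
/- Fix x̄, ȳ, u, and suppose V is directionally differentiable at x̄ in direction u. Let K(v) := {λ ∈ R^p : ∇_y f(x̄,ȳ) + ∇_y g(x̄,ȳ)ᵀλ = 0, λ ≥ 0, λᵀ g(x̄,ȳ) = 0, λᵀ ∇g(x̄,ȳ)(u,v) = 0}. If v₁, v₂ both satisfy ∇f(x̄,ȳ)(u, v_i) = V'(x̄; u) (i = 1, 2), then K(v₁) = K(v₂); consequently the multiplier-based set W(x̄, ȳ, u, v) := {∇_x f(x̄,ȳ) + ∇_x g(x̄,ȳ)ᵀ λ : λ ∈ K(v)} is independent of the choice of such v. -/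
open Filter Topology

private lemma key (m p : ℕ) (dfy : Fin m → ℝ) (dgy : Fin p → Fin m → ℝ)
    (lam : Fin p → ℝ) (hs : ∀ j, dfy j + ∑ i, lam i * dgy i j = 0)
    (A : Fin p → ℝ) (v : Fin m → ℝ) :
    ∑ i, lam i * (A i + ∑ j, dgy i j * v j)
      = (∑ i, lam i * A i) - ∑ j, dfy j * v j := by
  have h1 : ∑ i, lam i * ∑ j, dgy i j * v j = ∑ j, (∑ i, lam i * dgy i j) * v j := by
    simp only [Finset.mul_sum, Finset.sum_mul, mul_assoc]
    exact Finset.sum_comm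
  have h2 : ∀ j, (∑ i, lam i * dgy i j) = -dfy j := by
    intro j; linarith [hs j]
  simp only [mul_add, Finset.sum_add_distrib, h1]
  simp [h2]
  ring
open Filter Topology

/-- The multiplier set `K(v)` built from the gradient data of `f` and `g` at `(xb, yb)`:
stationarity in `y`, nonnegativity, complementarity with `g(xb,yb)`, and orthogonality to the
linearized constraint values `∇g(xb,yb)(u,v)`. -/
def multSet (n m p : ℕ) (dfy : Fin m → ℝ) (dgx : Fin p → Fin n → ℝ) (dgy : Fin p → Fin m → ℝ)
    (gval : Fin p → ℝ) (u : Fin n → ℝ) (v : Fin m → ℝ) : Set (Fin p → ℝ) :=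
  {lam | (∀ j, dfy j + ∑ i, lam i * dgy i j = 0) ∧ (∀ i, 0 ≤ lam i) ∧
    (∑ i, lam i * gval i = 0) ∧
    (∑ i, lam i * ((∑ j, dgx i j * u j) + (∑ j, dgy i j * v j)) = 0)}

/-- If `v₁, v₂` both satisfy `∇f(xb,yb)(u, v_i) = V'(xb; u)`, then `K(v₁) = K(v₂)`; consequently
the multiplier-based set `W(xb, yb, u, v) = {∇ₓf + ∇ₓgᵀλ : λ ∈ K(v)}` is independent of the
choice of such `v`. -/
theorem multSet_indep (n m p : ℕ)
    (dfx : Fin n → ℝ) (dfy : Fin m → ℝ)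
    (dgx : Fin p → Fin n → ℝ) (dgy : Fin p → Fin m → ℝ)
    (gval : Fin p → ℝ) (hgval : ∀ i, gval i ≤ 0)
    (u : Fin n → ℝ) (v₁ v₂ : Fin m → ℝ) (V' : ℝ)
    (h₁ : (∑ j, dfx j * u j) + (∑ j, dfy j * v₁ j) = V')
    (h₂ : (∑ j, dfx j * u j) + (∑ j, dfy j * v₂ j) = V') :
    multSet n m p dfy dgx dgy gval u v₁ = multSet n m p dfy dgx dgy gval u v₂ ∧
    {w : Fin n → ℝ | ∃ lam ∈ multSet n m p dfy dgx dgy gval u v₁,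
        ∀ j, w j = dfx j + ∑ i, lam i * dgx i j} =
      {w : Fin n → ℝ | ∃ lam ∈ multSet n m p dfy dgx dgy gval u v₂,
        ∀ j, w j = dfx j + ∑ i, lam i * dgx i j} := by
  have hvv : ∑ j, dfy j * v₁ j = ∑ j, dfy j * v₂ j := by linarith
  have hsub : ∀ v v' : Fin m → ℝ, (∑ j, dfy j * v j = ∑ j, dfy j * v' j) →
      multSet n m p dfy dgx dgy gval u v ⊆ multSet n m p dfy dgx dgy gval u v' := by
    intro v v' hvv' lam ⟨hst, hnn, hc, ho⟩
    refine ⟨hst, hnn, hc, ?_⟩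
    rw [key m p dfy dgy lam hst _ v'] ; rw [key m p dfy dgy lam hst _ v] at ho
    linarith
  have hK : multSet n m p dfy dgx dgy gval u v₁ = multSet n m p dfy dgx dgy gval u v₂ :=
    Set.Subset.antisymm (hsub v₁ v₂ hvv) (hsub v₂ v₁ hvv.symm)
  exact ⟨hK, by rw [hK]⟩
end
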